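/- arXiv:1805.11425 — 9 statements merged into one kernel-verified Lean document; each statement's English description precedes it below -/
import Mathlib

section
/- For integers n, r with n ≥ 4 and r ≥ 2 and n - 2 ≥ r, we have C(n,r) - C(2,r) - C(n-2,r) > C(n-1,r-1). -/
theorem stmt_2 (n r : ℕ) (hn : 4 ≤ n) (hr : 2 ≤ r) (h : r ≤ n - 2) :
    ((n - 1).choose (r - 1) : ℤ) <
      (n.choose r : ℤ) - (Nat.choose 2 r : ℤ) - ((n - 2).choose r : ℤ) := by
  obtain ⟨a, rfl⟩ : ∃ a, n = a + 2 := ⟨n - 2, by omega⟩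
  obtain ⟨b, rfl⟩ : ∃ b, r = b + 2 := ⟨r - 2, by omega⟩
  simp only [Nat.add_sub_cancel] at h ⊢
  have h1 : a + 2 - 1 = a + 1 := by omega
  have h2 : b + 2 - 1 = b + 1 := by omega
  rw [h1, h2]
  have key : (a + 2).choose (b + 2)
      = (a + 1).choose (b + 1) + (a.choose (b + 1) + a.choose (b + 2)) := by
    rw [Nat.choose_succ_succ (a + 1) (b + 1), Nat.choose_succ_succ a (b + 1)]
  rw [key]
  push_cast
  have hpos : 0 < a.choose (b + 1) := Nat.choose_pos (by omega)
  rcases Nat.eq_zero_or_pos b with rfl | hb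
  · have : Nat.choose 2 2 = 1 := rfl
    rw [this]
    have : 2 ≤ a.choose 1 := by simpa using (by omega : 2 ≤ a)
    push_cast
    have := (Int.ofNat_le.mpr this)
    push_cast at this
    linarith
  · have : Nat.choose 2 (b + 2) = 0 := Nat.choose_eq_zero_of_lt (by omega)
    rw [this]
    have := (Int.ofNat_lt.mpr hpos)
    push_cast at this ⊢
    linarith
end

section
/- Let n, k, r, t be integers with k, r ≥ 2, C(t-1,r-1) ≤ k < C(t,r-1), and n ≥ t. Then C(n,r) ≥ (n-1)·k - ((t-1)·k - C(t,r))·⌊n/t⌋. -/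
lemma aux_choose_lb (t r n : ℕ) (hr : 1 ≤ r) (hn : t ≤ n) :
    t.choose r + (n - t) * t.choose (r - 1) ≤ n.choose r := by
  induction n, hn using Nat.le_induction with
  | base => simp
  | succ m hm ih =>
    have hms : m + 1 - t = (m - t) + 1 := by omega
    have h1 : t.choose (r - 1) ≤ m.choose (r - 1) := Nat.choose_le_choose _ hm
    have h2 : (m + 1).choose r = m.choose (r - 1) + m.choose r := by
      have hr' : r = (r - 1) + 1 := by omega
      rw [hr']
      exact Nat.choose_succ_succ m (r - 1)
    calc t.choose r + (m + 1 - t) * t.choose (r - 1)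
        = (t.choose r + (m - t) * t.choose (r - 1)) + t.choose (r - 1) := by
          rw [hms]; ring
      _ ≤ m.choose r + m.choose (r - 1) := Nat.add_le_add ih h1
      _ = (m + 1).choose r := by omega

theorem stmt_5 (n k r t : ℕ) (hk : 2 ≤ k) (hr : 2 ≤ r)
    (ht1 : (t - 1).choose (r - 1) ≤ k) (ht2 : k < t.choose (r - 1))
    (hn : t ≤ n) :
    ((n : ℤ) - 1) * k - (((t : ℤ) - 1) * k - (t.choose r : ℤ)) * ((n / t : ℕ) : ℤ)
      ≤ (n.choose r : ℤ) := by
  have ht : 1 ≤ t := by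
    by_contra h
    have : t = 0 := by omega
    subst this
    rw [show r - 1 = (r - 2) + 1 by omega] at ht2
    simp [Nat.choose] at ht2
  have hBr : t.choose r * r = t.choose (r - 1) * (t - (r - 1)) := by
    have h := Nat.choose_succ_right_eq t (r - 1)
    rwa [show r - 1 + 1 = r by omega] at h
  have hB : t.choose r ≤ (t - 1) * t.choose (r - 1) := by
    calc t.choose r ≤ t.choose r * r := Nat.le_mul_of_pos_right _ (by omega)
      _ = t.choose (r - 1) * (t - (r - 1)) := hBr
      _ ≤ t.choose (r - 1) * (t - 1) := Nat.mul_le_mul_left _ (by omega)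
      _ = (t - 1) * t.choose (r - 1) := Nat.mul_comm _ _
  have key := aux_choose_lb t r n (by omega) hn
  set q : ℕ := n / t with hq
  set s : ℕ := n % t with hs
  have hqs : t * q + s = n := Nat.div_add_mod n t
  have hq1 : 1 ≤ q := (Nat.one_le_div_iff (by omega)).2 hn
  -- cast everything to ℤ
  have keyZ : (t.choose r : ℤ) + ((n : ℤ) - t) * (t.choose (r - 1) : ℤ) ≤ (n.choose r : ℤ) := by
    have := (Nat.cast_le (α := ℤ)).2 key
    push_cast [Nat.cast_sub hn] at this
    linarith
  have hBZ : (t.choose r : ℤ) ≤ ((t : ℤ) - 1) * (t.choose (r - 1) : ℤ) := by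
    have := (Nat.cast_le (α := ℤ)).2 hB
    push_cast [Nat.cast_sub ht] at this
    linarith
  have hkZ : (k : ℤ) + 1 ≤ (t.choose (r - 1) : ℤ) := by exact_mod_cast ht2
  have hqsZ : (t : ℤ) * q + s = n := by exact_mod_cast hqs
  have hq1Z : (1 : ℤ) ≤ q := by exact_mod_cast hq1
  have hsZ : (0 : ℤ) ≤ s := by positivity
  have htZ : (1 : ℤ) ≤ t := by exact_mod_cast ht
  have hkZ' : (2 : ℤ) ≤ k := by exact_mod_cast hk
  nlinarith [mul_nonneg (sub_nonneg.2 hq1Z)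
      (by linarith : (0:ℤ) ≤ (t : ℤ) * (t.choose (r - 1) : ℤ) - k - t.choose r),
    mul_nonneg hsZ (by linarith : (0:ℤ) ≤ (t.choose (r - 1) : ℤ) - k)]
end

section
/- Let n, a, k, r, t be integers with k, r ≥ 2, C(t-1,r-1) ≤ k < C(t,r-1), and n ≥ a ≥ t. Then C(n,r) ≥ (n-a)·k + C(a,r) - ((t-1)·k - C(t,r))·⌊(n-a)/t⌋. -/
/-! Each Pascal step past `t` adds `m.choose (r - 1) > k`, so `C(n,r) ≥ C(a,r) + (n - a) k`;
and `r C(t,r) = t C(t-1,r-1) ≤ t k` with `r ≥ 2` makes the coefficient `(t-1) k - C(t,r)` of the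
floor term nonnegative, so that term only lowers the left-hand side. -/

theorem Nat.choose_succ_add_mul_le {a r c : ℕ} (hc : c ≤ a.choose r) (d : ℕ) :
    a.choose (r + 1) + d * c ≤ (a + d).choose (r + 1) := by
  induction d with
  | zero => simp
  | succ d ih =>
    have hstep : c ≤ (a + d).choose r := hc.trans (Nat.choose_le_choose r (Nat.le_add_right a d))
    calc a.choose (r + 1) + (d + 1) * c = a.choose (r + 1) + d * c + c := by ring
      _ ≤ (a + d).choose (r + 1) + (a + d).choose r := by omega
      _ = (a + (d + 1)).choose (r + 1) := by
        rw [← Nat.add_assoc, Nat.choose_succ_succ', Nat.add_comm]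

theorem Nat.choose_add_two_le_pred_mul {t j k : ℕ} (h : (t - 1).choose (j + 1) ≤ k) :
    t.choose (j + 2) ≤ (t - 1) * k := by
  rcases t with _ | s
  · simp
  rcases s with _ | s
  · simp [Nat.choose_eq_zero_of_lt (show 1 < j + 2 by omega)]
  simp only [Nat.add_sub_cancel] at h ⊢
  have hdouble : 2 * (s + 2).choose (j + 2) ≤ 2 * ((s + 1) * k) :=
    calc 2 * (s + 2).choose (j + 2) ≤ (s + 2).choose (j + 2) * (j + 2) := by
          rw [Nat.mul_comm]; exact Nat.mul_le_mul_left _ (by omega)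
      _ = (s + 2) * (s + 1).choose (j + 1) := (Nat.add_one_mul_choose_eq (s + 1) (j + 1)).symm
      _ ≤ (s + 2) * k := Nat.mul_le_mul_left _ h
      _ ≤ 2 * ((s + 1) * k) := by nlinarith
  exact Nat.le_of_mul_le_mul_left hdouble two_pos

theorem stmt_6_general (n a k r t : ℕ) (hr : 2 ≤ r)
    (ht1 : (t - 1).choose (r - 1) ≤ k) (ht2 : k < t.choose (r - 1))
    (hna : a ≤ n) (hat : t ≤ a) :
    ((n : ℤ) - a) * k + (a.choose r : ℤ)
        - (((t : ℤ) - 1) * k - (t.choose r : ℤ)) * (((n - a) / t : ℕ) : ℤ)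
      ≤ (n.choose r : ℤ) := by
  obtain ⟨j, rfl⟩ : ∃ j, r = j + 2 := ⟨r - 2, by omega⟩
  rw [show j + 2 - 1 = j + 1 by omega] at ht1 ht2
  have ht : 1 ≤ t := Nat.pos_of_ne_zero (by rintro rfl; simp at ht2)
  have hgrowth : a.choose (j + 2) + (n - a) * k ≤ n.choose (j + 2) := by
    have hka : k ≤ a.choose (j + 1) := ht2.le.trans (Nat.choose_le_choose _ hat)
    simpa [Nat.add_sub_cancel' hna] using Nat.choose_succ_add_mul_le hka (n - a)
  have hdeficit := Nat.choose_add_two_le_pred_mul ht1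
  zify [hna, ht] at hgrowth hdeficit
  have hfloor : (0 : ℤ) ≤ (((n - a) / t : ℕ) : ℤ) := Int.natCast_nonneg _
  linarith [mul_nonneg (sub_nonneg.mpr hdeficit) hfloor]

theorem stmt_6 (n a k r t : ℕ) (hk : 2 ≤ k) (hr : 2 ≤ r)
    (ht1 : (t - 1).choose (r - 1) ≤ k) (ht2 : k < t.choose (r - 1))
    (hna : a ≤ n) (hat : t ≤ a) :
    ((n : ℤ) - a) * k + (a.choose r : ℤ)
        - (((t : ℤ) - 1) * k - (t.choose r : ℤ)) * (((n - a) / t : ℕ) : ℤ)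
      ≤ (n.choose r : ℤ) :=
  stmt_6_general n a k r t hr ht1 ht2 hna hat
end

section
/- Let H be an r-uniform hypergraph (r ≥ 2, k ≥ 2) and let X be a nonempty proper subset of V(H) such that the number of edges crossing between X and V(H)\X equals k, and every vertex of H has degree at least k. If |X| ≤ r - 1, then H has no edge entirely contained in X, and every edge of H that intersects both X and V(H)\X contains X as a subset. -/
theorem stmt_8 {V : Type*} [Fintype V] [DecidableEq V] (r k : ℕ)
    (hr : 2 ≤ r) (hk : 2 ≤ k)
    (E : Finset (Finset V)) (huni : ∀ e ∈ E, e.card = r)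
    (X : Finset V) (hXne : X.Nonempty) (hXprop : X ≠ Finset.univ)
    (hcut : (E.filter (fun e => (e ∩ X).Nonempty ∧ (e ∩ Xᶜ).Nonempty)).card = k)
    (hdeg : ∀ v : V, k ≤ (E.filter (fun e => v ∈ e)).card)
    (hXcard : X.card ≤ r - 1) :
    (∀ e ∈ E, ¬ e ⊆ X) ∧
      (∀ e ∈ E, (e ∩ X).Nonempty → (e ∩ Xᶜ).Nonempty → X ⊆ e) := by
  have hnotin : ∀ e ∈ E, ¬ e ⊆ X := by
    intro e he hsub
    have := Finset.card_le_card hsub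
    rw [huni e he] at this
    omega
  refine ⟨hnotin, ?_⟩
  intro e he h1 h2 v hv
  -- set of edges containing v is a subset of the cut
  have hsub : E.filter (fun e => v ∈ e) ⊆
      E.filter (fun e => (e ∩ X).Nonempty ∧ (e ∩ Xᶜ).Nonempty) := by
    intro f hf
    rw [Finset.mem_filter] at hf ⊢
    refine ⟨hf.1, ⟨v, Finset.mem_inter.2 ⟨hf.2, hv⟩⟩, ?_⟩
    have : ¬ f ⊆ X := hnotin f hf.1
    obtain ⟨w, hw, hwX⟩ := Finset.not_subset.1 this
    exact ⟨w, Finset.mem_inter.2 ⟨hw, Finset.mem_compl.2 hwX⟩⟩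
  have heq : E.filter (fun e => v ∈ e) =
      E.filter (fun e => (e ∩ X).Nonempty ∧ (e ∩ Xᶜ).Nonempty) :=
    Finset.eq_of_subset_of_card_le hsub (by rw [hcut]; exact hdeg v)
  have : e ∈ E.filter (fun e => v ∈ e) := by
    rw [heq, Finset.mem_filter]; exact ⟨he, h1, h2⟩
  exact (Finset.mem_filter.1 this).2
end

section
/- Let k, r ≥ 2 be integers and s the largest integer with k + C(s,r) ≤ k·s. Then for every integer i with r ≤ i ≤ s, we have k + C(i,r) ≤ k·i. -/
theorem stmt_11 (k r s : ℕ) (hk : 2 ≤ k) (hr : 2 ≤ r)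
    (hs1 : k + s.choose r ≤ k * s)
    (hs2 : ∀ m : ℕ, k + m.choose r ≤ k * m → m ≤ s) :
    ∀ i : ℕ, r ≤ i → i ≤ s → k + i.choose r ≤ k * i := by
  classical
  intro i hri his
  by_contra hcon
  push_neg at hcon
  obtain ⟨t, rfl⟩ : ∃ t, r = t + 1 := ⟨r - 1, by omega⟩
  have hP : ∃ m, t + 1 ≤ m ∧ m ≤ s ∧ k * m < k + m.choose (t + 1) :=
    ⟨i, hri, his, hcon⟩
  obtain ⟨hm1, hm2, hm3⟩ := Nat.find_spec hP
  -- base case: the inequality holds at r = t+1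
  have hbase : k + (t + 1).choose (t + 1) ≤ k * (t + 1) := by
    rw [Nat.choose_self]
    have : 2 ≤ t + 1 := hr
    nlinarith
  have hm0r : t + 1 < Nat.find hP := by
    rcases lt_or_eq_of_le hm1 with h | h
    · exact h
    · exfalso; rw [← h] at hm3; omega
  obtain ⟨j, hjeq⟩ : ∃ j, Nat.find hP = j + 1 := ⟨Nat.find hP - 1, by omega⟩
  rw [hjeq] at hm1 hm2 hm3
  -- j is not a counterexample
  have hj : ¬ (t + 1 ≤ j ∧ j ≤ s ∧ k * j < k + j.choose (t + 1)) :=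
    Nat.find_min hP (m := j) (by omega)
  have hjr : t + 1 ≤ j := by omega
  have hjs : j ≤ s := by omega
  have hjok : k + j.choose (t + 1) ≤ k * j := by
    by_contra h; exact hj ⟨hjr, hjs, by omega⟩
  -- from the failure at j+1: k < C(j, t)
  have hsucc : (j + 1).choose (t + 1) = j.choose t + j.choose (t + 1) :=
    Nat.choose_succ_succ' j t
  have hklt : k < j.choose t := by
    rw [hsucc] at hm3
    have : k * (j + 1) = k * j + k := by ring
    omega
  -- the failure propagates upward
  have hstep : ∀ n : ℕ, k * (j + 1 + n) < k + (j + 1 + n).choose (t + 1) := by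
    intro n
    induction n with
    | zero => simpa using hm3
    | succ n ih =>
      have hmono : j.choose t ≤ (j + 1 + n).choose t :=
        Nat.choose_le_choose t (by omega)
      have h2 : (j + 1 + n + 1).choose (t + 1)
          = (j + 1 + n).choose t + (j + 1 + n).choose (t + 1) :=
        Nat.choose_succ_succ' (j + 1 + n) t
      have h3 : j + 1 + (n + 1) = j + 1 + n + 1 := by ring
      have h4 : k * (j + 1 + n + 1) = k * (j + 1 + n) + k := by ring
      rw [h3, h2]
      omega
  have hfin := hstep (s - (j + 1))
  have : j + 1 + (s - (j + 1)) = s := by omega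
  rw [this] at hfin
  omega
end

section
/- Let n, k, l, r, t be integers with k, r ≥ 2, l ≥ t+1, l ≤ n < 2t, where t is the largest integer such that C(t-1,r-1) ≤ k. If H is a (k,l)-edge-maximal r-uniform hypergraph on n vertices, then |E(H)| ≥ C(l-1,r) + (n-l+1)·k. -/
/-!
Induction on the number of vertices. Every vertex has degree at least `k`: either all `r`-sets
through `v` are edges, and there are `C(n-1, r-1) > k` of them, or adding a missing one creates a
`(k+1)`-edge-connected subhypergraph in which `v` has degree at least `k + 1`.

Take a cut `(X, V \ X)` with at most `k` crossing edges and `|X| ≤ n/2 < t`. There are at least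
`C(n-1, r-1) > k` crossing `r`-sets, so some crossing `f` is missing. The `(k+1)`-edge-connected
subhypergraph created by `f` crosses `X` exactly in `f` and the old crossing edges; counting the
incidences between `X` and these `k + 1` edges, with `C(|X|, r-1) ≤ k`, forces each of them to
contain `X`. Hence every crossing `r`-set contains `X`, so `X = {v}` is a vertex of degree `k`.
Deleting `v` leaves a `(k,l)`-edge-maximal hypergraph on `n - 1` vertices, which for `n = l` is
complete.
-/

/-- The set of edges of `E` crossing the cut `(X, S \ X)` inside ground set `S`. -/
def cutEdges {V : Type*} [DecidableEq V] (E : Finset (Finset V)) (S X : Finset V) :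
    Finset (Finset V) :=
  E.filter fun e => (e ∩ X).Nonempty ∧ (e ∩ (S \ X)).Nonempty

/-- `E` is the edge set of a `(k,l)`-edge-maximal `r`-uniform hypergraph on vertex set `W`:
every subhypergraph on at least `l` vertices has edge-connectivity at most `k`, and
adding any missing `r`-subset of `W` creates a subhypergraph on at least `l` vertices
with edge-connectivity at least `k + 1`. -/
def IsKLEdgeMaximal {V : Type*} [DecidableEq V] (r k l : ℕ) (W : Finset V)
    (E : Finset (Finset V)) : Prop :=
  (∀ e ∈ E, e.card = r ∧ e ⊆ W) ∧
  (∀ S ⊆ W, ∀ E' ⊆ E, (∀ e ∈ E', e ⊆ S) → l ≤ S.card →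
    ∃ X ⊆ S, X.Nonempty ∧ (S \ X).Nonempty ∧ (cutEdges E' S X).card ≤ k) ∧
  (∀ e : Finset V, e ⊆ W → e.card = r → e ∉ E →
    ∃ S ⊆ W, ∃ E' ⊆ insert e E, (∀ f ∈ E', f ⊆ S) ∧ l ≤ S.card ∧
      ∀ X ⊆ S, X.Nonempty → (S \ X).Nonempty → k + 1 ≤ (cutEdges E' S X).card)

open Finset

namespace Nat

theorem choose_add_choose_le_choose_add_sub_one {a b r : ℕ} (ha : 1 ≤ a) (hb : 1 ≤ b)
    (hr : 2 ≤ r) : a.choose r + b.choose r ≤ (a + b - 1).choose r := by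
  induction b, hb using Nat.le_induction with
  | base => simp [choose_eq_zero_of_lt (by omega : 1 < r)]
  | succ b hb ih =>
    obtain ⟨s, rfl⟩ : ∃ s, r = s + 1 := ⟨r - 1, by omega⟩
    rw [show a + (b + 1) - 1 = a + b - 1 + 1 by omega, choose_succ_succ', choose_succ_succ']
    have := choose_le_choose s (by omega : b ≤ a + b - 1)
    omega

theorem le_sub_one_of_mul_sub_choose_le {x k r : ℕ} (hx : x.choose (r - 1) ≤ k)
    (h : x * (k + 1 - (x - 1).choose (r - 1)) ≤ (k + 1) * (r - 1)) : x ≤ r - 1 := by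
  generalize r - 1 = s at *
  by_contra! hxs
  obtain ⟨d, rfl⟩ : ∃ d, x = d + s + 1 := ⟨x - s - 1, by omega⟩
  have hid := choose_mul_succ_eq (d + s) s
  rw [Nat.add_sub_cancel] at h
  rw [show d + s + 1 - s = d + 1 by omega] at hid
  have hC : (d + s).choose s ≤ k := (choose_le_succ _ _).trans hx
  obtain ⟨a, ha⟩ : ∃ a, k + 1 = (d + s).choose s + a :=
    ⟨_, (add_sub_of_le (by omega)).symm⟩
  rw [ha, Nat.add_sub_cancel_left] at h
  nlinarith [Nat.mul_le_mul_right (d + 1) hx]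

theorem le_of_one_lt_choose_sub_one {t r : ℕ} (h : 1 < t.choose (r - 1)) : r ≤ t := by
  by_contra! htr
  rcases (show t < r - 1 ∨ t = r - 1 by omega) with hlt | rfl
  · rw [choose_eq_zero_of_lt hlt] at h
    omega
  · rw [choose_self] at h
    omega

end Nat

variable {V : Type*} [DecidableEq V]

namespace Finset

theorem card_filter_mem_powersetCard {W : Finset V} {v : V} {r : ℕ} (hv : v ∈ W)
    (hr : 1 ≤ r) : #{e ∈ W.powersetCard r | v ∈ e} = (W.card - 1).choose (r - 1) := by
  rw [← card_erase_of_mem hv, ← card_powersetCard]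
  refine card_nbij' (·.erase v) (insert v) (fun e he => ?_) (fun T hT => ?_)
    (fun e he => insert_erase (mem_filter.1 he).2) (fun T hT => erase_insert ?_)
  · simp only [coe_filter, mem_powersetCard, mem_coe] at he ⊢
    exact ⟨erase_subset_erase v he.1.1, by rw [card_erase_of_mem he.2, he.1.2]⟩
  · simp only [coe_filter, mem_powersetCard, mem_coe] at hT ⊢
    have hvT : v ∉ T := fun h => by simpa using hT.1 h
    refine ⟨⟨insert_subset hv (hT.1.trans (erase_subset _ _)), ?_⟩, mem_insert_self _ _⟩
    rw [card_insert_of_notMem hvT, hT.2]; omega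
  · have := (mem_powersetCard.1 (mem_coe.1 hT)).1
    exact fun h => by simpa using this h

theorem forall_subset_of_le_choose_add_card_filter_mem {X : Finset V} {F : Finset (Finset V)}
    {k r : ℕ} (hF : ∀ e ∈ F, e.card = r ∧ ¬e ⊆ X) (hFk : F.card ≤ k + 1)
    (hX : X.card.choose (r - 1) ≤ k)
    (hdeg : ∀ v ∈ X, k + 1 ≤ (X.card - 1).choose (r - 1) + #{e ∈ F | v ∈ e}) :
    ∀ e ∈ F, X ⊆ e := by
  -- double count incidences between `X` and `F`; each member of `F` meets `X` in `< r` points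
  have hsum : X.card * (k + 1 - (X.card - 1).choose (r - 1)) ≤ (k + 1) * (r - 1) :=
    calc _ ≤ ∑ e ∈ F, #(X ∩ e) := le_sum_card_inter fun v hv => by have := hdeg v hv; omega
      _ ≤ F.card * (r - 1) := by
        refine sum_le_card_nsmul F _ _ fun e he => ?_
        have hlt : #(X ∩ e) < e.card :=
          card_lt_card (ssubset_of_subset_of_ne inter_subset_right
            (mt inter_eq_right.1 (hF e he).2))
        have := (hF e he).1
        omega
      _ ≤ _ := Nat.mul_le_mul_right _ hFk
  have hxr := Nat.le_sub_one_of_mul_sub_choose_le hX hsum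
  intro e he v hv
  have hC : (X.card - 1).choose (r - 1) = 0 :=
    Nat.choose_eq_zero_of_lt (by have := card_pos.2 ⟨v, hv⟩; omega)
  have hall : #{e ∈ F | v ∈ e} = F.card := by
    have := hdeg v hv
    have := card_filter_le F (v ∈ ·)
    omega
  exact card_filter_eq_iff.1 hall e he

end Finset

section cutEdges

variable {E F : Finset (Finset V)} {S W X e : Finset V} {v : V}

theorem mem_cutEdges :
    e ∈ cutEdges E S X ↔ e ∈ E ∧ (e ∩ X).Nonempty ∧ (e ∩ (S \ X)).Nonempty :=
  mem_filter

theorem cutEdges_sdiff (hX : X ⊆ S) : cutEdges E S (S \ X) = cutEdges E S X := by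
  unfold cutEdges
  rw [Finset.sdiff_sdiff_eq_self hX]
  exact filter_congr fun _ _ => and_comm

theorem cutEdges_inter_subset (hFE : F ⊆ E) (hSW : S ⊆ W) :
    cutEdges F S (X ∩ S) ⊆ cutEdges E W X := by
  intro e he
  obtain ⟨heF, ⟨u, hu⟩, ⟨u', hu'⟩⟩ := mem_cutEdges.1 he
  simp only [mem_inter, mem_sdiff] at hu hu'
  refine mem_cutEdges.2 ⟨hFE heF, ⟨u, mem_inter.2 ⟨hu.1, hu.2.1⟩⟩, ⟨u', ?_⟩⟩
  exact mem_inter.2 ⟨hu'.1, mem_sdiff.2 ⟨hSW hu'.2.1, fun h => hu'.2.2 ⟨h, hu'.2.1⟩⟩⟩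

theorem cutEdges_singleton_subset : cutEdges E S {v} ⊆ {e ∈ E | v ∈ e} := by
  intro e he
  obtain ⟨heE, ⟨u, hu⟩, -⟩ := mem_cutEdges.1 he
  rw [mem_inter, mem_singleton] at hu
  exact mem_filter.2 ⟨heE, hu.2 ▸ hu.1⟩

theorem filter_mem_subset_cutEdges_singleton (hE : ∀ e ∈ E, 1 < e.card ∧ e ⊆ S) :
    {e ∈ E | v ∈ e} ⊆ cutEdges E S {v} := by
  intro e he
  obtain ⟨heE, hve⟩ := mem_filter.1 he
  obtain ⟨u, hue, huv⟩ := exists_mem_ne (hE e heE).1 v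
  exact mem_cutEdges.2
    ⟨heE, ⟨v, by simp [hve]⟩, ⟨u, by simp [hue, (hE e heE).2 hue, huv]⟩⟩

theorem cutEdges_insert_subset : cutEdges (insert e E) S X ⊆ insert e (cutEdges E S X) := by
  unfold cutEdges
  rw [filter_insert]
  split_ifs
  exacts [subset_rfl, subset_insert _ _]

theorem exists_mem_cutEdges_of_choose_lt {r : ℕ} (hE : ∀ e ∈ E, e.card = r ∧ e ⊆ W)
    (hr : 1 ≤ r) (hv : v ∈ X) (hdeg : (X.card - 1).choose (r - 1) < #{e ∈ E | v ∈ e}) :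
    ∃ e ∈ cutEdges E W X, v ∈ e := by
  by_contra! h
  refine hdeg.not_ge ((card_le_card fun e he => ?_).trans (card_filter_mem_powersetCard hv hr).le)
  obtain ⟨heE, hve⟩ := mem_filter.1 he
  refine mem_filter.2 ⟨mem_powersetCard.2 ⟨fun u hu => ?_, (hE e heE).1⟩, hve⟩
  by_contra huX
  exact h e (mem_cutEdges.2 ⟨heE, ⟨v, mem_inter.2 ⟨hve, hv⟩⟩,
    ⟨u, mem_inter.2 ⟨hu, mem_sdiff.2 ⟨(hE e heE).2 hu, huX⟩⟩⟩⟩) hve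

theorem choose_le_card_cutEdges_powersetCard {r : ℕ} (hr : 2 ≤ r) (hXW : X ⊆ W)
    (hX : X.Nonempty) (hWX : (W \ X).Nonempty) :
    (W.card - 1).choose (r - 1) ≤ (cutEdges (W.powersetCard r) W X).card := by
  have hcover : W.powersetCard r ⊆
      X.powersetCard r ∪ (W \ X).powersetCard r ∪ cutEdges (W.powersetCard r) W X := by
    intro e he
    obtain ⟨heW, her⟩ := mem_powersetCard.1 he
    simp only [mem_union, mem_cutEdges, mem_powersetCard]
    by_cases heX : (e ∩ X).Nonempty
    · by_cases heWX : (e ∩ (W \ X)).Nonempty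
      · exact .inr ⟨⟨heW, her⟩, heX, heWX⟩
      · refine .inl (.inl ⟨fun u hu => ?_, her⟩)
        by_contra huX
        exact heWX ⟨u, mem_inter.2 ⟨hu, mem_sdiff.2 ⟨heW hu, huX⟩⟩⟩
    · exact .inl (.inr ⟨fun u hu =>
        mem_sdiff.2 ⟨heW hu, fun huX => heX ⟨u, mem_inter.2 ⟨hu, huX⟩⟩⟩, her⟩)
  have hcard := (card_le_card hcover).trans
    ((card_union_le _ _).trans (Nat.add_le_add_right (card_union_le _ _) _))
  have hsplit := card_sdiff_add_card_eq_card hXW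
  have hineq := Nat.choose_add_choose_le_choose_add_sub_one (card_pos.2 hX) (card_pos.2 hWX) hr
  rw [add_comm X.card, hsplit] at hineq
  have hpascal := Nat.choose_eq_choose_pred_add (card_pos.2 (hX.mono hXW)) (by omega : 0 < r)
  simp only [card_powersetCard] at hcard
  omega

theorem card_le_one_of_forall_subset_of_mem_cutEdges {r : ℕ} (hr : 2 ≤ r)
    (hW : r + 1 ≤ W.card) (hXW : X ⊆ W) (hWX : (W \ X).Nonempty)
    (h : ∀ g ∈ cutEdges (W.powersetCard r) W X, X ⊆ g) : X.card ≤ 1 := by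
  refine card_le_one.2 fun u hu u' hu' => ?_
  by_contra hne
  -- an `r`-set through `u` and some `y ∉ X` but avoiding `u'` crosses without containing `X`
  obtain ⟨y, hy⟩ := hWX
  obtain ⟨g, hug, hgW, hg⟩ :=
    exists_subsuperset_card_eq (s := {u, y}) (t := W.erase u') (n := r)
    (insert_subset (mem_erase.2 ⟨hne, hXW hu⟩) (singleton_subset_iff.2
      (mem_erase.2 ⟨fun h => (mem_sdiff.1 hy).2 (h ▸ hu'), (mem_sdiff.1 hy).1⟩)))
    (card_le_two.trans hr) (by rw [card_erase_of_mem (hXW hu')]; omega)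
  have : X ⊆ g := h g (mem_cutEdges.2
    ⟨mem_powersetCard.2 ⟨hgW.trans (erase_subset _ _), hg⟩,
      ⟨u, mem_inter.2 ⟨hug (by simp), hu⟩⟩, ⟨y, mem_inter.2 ⟨hug (by simp), hy⟩⟩⟩)
  exact (mem_erase.1 (hgW (this hu'))).1 rfl

end cutEdges

def IsEdgeConnected (m : ℕ) (S : Finset V) (F : Finset (Finset V)) : Prop :=
  ∀ X ⊆ S, X.Nonempty → (S \ X).Nonempty → m ≤ (cutEdges F S X).card

theorem IsEdgeConnected.le_card_filter_mem {m : ℕ} {S : Finset V} {F : Finset (Finset V)} {v : V}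
    (h : IsEdgeConnected m S F) (hS : 2 ≤ S.card) (hv : v ∈ S) :
    m ≤ #{e ∈ F | v ∈ e} := by
  refine (h {v} (singleton_subset_iff.2 hv) (singleton_nonempty v) ?_).trans
    (card_le_card cutEdges_singleton_subset)
  rw [sdiff_singleton_eq_erase, erase_nonempty hv, ← one_lt_card_iff_nontrivial]
  omega

-- The cut of `F` at `X ∩ S` lies inside `insert f (cutEdges E W X)`, and `f` makes it a proper
-- cut of `S`, so it has at least `k + 1` edges.
theorem IsEdgeConnected.cutEdges_inter_eq_insert {k : ℕ} {S W X f : Finset V}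
    {E F : Finset (Finset V)} (hconn : IsEdgeConnected (k + 1) S F) (hF : F ⊆ insert f E)
    (hSW : S ⊆ W) (hfS : f ⊆ S) (hfX : (f ∩ X).Nonempty)
    (hfWX : (f ∩ (W \ X)).Nonempty) (hsize : (insert f (cutEdges E W X)).card ≤ k + 1) :
    cutEdges F S (X ∩ S) = insert f (cutEdges E W X) := by
  refine eq_of_subset_of_card_le ((cutEdges_inter_subset hF hSW).trans cutEdges_insert_subset)
    (hsize.trans (hconn _ inter_subset_right ?_ ?_))
  · obtain ⟨u, hu⟩ := hfX
    exact ⟨u, mem_inter.2 ⟨(mem_inter.1 hu).2, hfS (mem_inter.1 hu).1⟩⟩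
  · obtain ⟨u, hu⟩ := hfWX
    exact ⟨u, mem_sdiff.2 ⟨hfS (mem_inter.1 hu).1,
      fun h => (mem_sdiff.1 (mem_inter.1 hu).2).2 (mem_inter.1 h).1⟩⟩

namespace IsKLEdgeMaximal

variable {r k l : ℕ} {W X f : Finset V} {E : Finset (Finset V)} {v : V}

theorem powersetCard_subset (hE : IsKLEdgeMaximal r k l W E) (hW : W.card < l) :
    W.powersetCard r ⊆ E := by
  intro f hf
  obtain ⟨hfW, hfr⟩ := mem_powersetCard.1 hf
  by_contra hfE
  obtain ⟨S, hSW, -, -, -, hlS, -⟩ := hE.2.2 f hfW hfr hfE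
  have := card_le_card hSW
  omega

theorem exists_isEdgeConnected_mem (hE : IsKLEdgeMaximal r k l W E) (hfW : f ⊆ W)
    (hfr : f.card = r) (hfE : f ∉ E) :
    ∃ S ⊆ W, ∃ F ⊆ insert f E, f ∈ F ∧ (∀ e ∈ F, e ⊆ S) ∧ l ≤ S.card ∧
      IsEdgeConnected (k + 1) S F := by
  obtain ⟨S, hSW, F, hF, hFS, hlS, hconn⟩ := hE.2.2 f hfW hfr hfE
  refine ⟨S, hSW, F, hF, ?_, hFS, hlS, hconn⟩
  by_contra hfF
  have hFE : F ⊆ E := fun e he =>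
    (mem_insert.1 (hF he)).resolve_left (ne_of_mem_of_not_mem he hfF)
  obtain ⟨X, hXS, hX, hSX, hcut⟩ := hE.2.1 S hSW F hFE hFS hlS
  have := hconn X hXS hX hSX
  omega

theorem le_card_filter_mem (hE : IsKLEdgeMaximal r k l W E) (hl : 2 ≤ l) (hr : 1 ≤ r)
    (hk : k ≤ (W.card - 1).choose (r - 1)) (hv : v ∈ W) : k ≤ #{e ∈ E | v ∈ e} := by
  by_cases hstar : {e ∈ W.powersetCard r | v ∈ e} ⊆ E
  · rw [← card_filter_mem_powersetCard hv hr] at hk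
    exact hk.trans (card_le_card fun e he => mem_filter.2 ⟨hstar he, (mem_filter.1 he).2⟩)
  obtain ⟨f, hf, hfE⟩ := not_subset.1 hstar
  obtain ⟨hfWr, hvf⟩ := mem_filter.1 hf
  obtain ⟨hfW, hfr⟩ := mem_powersetCard.1 hfWr
  obtain ⟨S, -, F, hF, hfF, hFS, hlS, hconn⟩ := hE.exists_isEdgeConnected_mem hfW hfr hfE
  have hF_deg := hconn.le_card_filter_mem (by omega) (hFS f hfF hvf)
  have hinsert : #{e ∈ insert f E | v ∈ e} ≤ #{e ∈ E | v ∈ e} + 1 := by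
    rw [filter_insert, if_pos hvf]
    exact card_insert_le _ _
  have := card_le_card (filter_subset_filter (v ∈ ·) hF)
  omega

theorem exists_cutEdges_le (hE : IsKLEdgeMaximal r k l W E) (hlW : l ≤ W.card) :
    ∃ X ⊆ W, X.Nonempty ∧ (W \ X).Nonempty ∧ (cutEdges E W X).card ≤ k ∧
      2 * X.card ≤ W.card := by
  obtain ⟨X, hXW, hX, hWX, hcut⟩ :=
    hE.2.1 W subset_rfl E subset_rfl (fun e he => (hE.1 e he).2) hlW
  have hsplit := card_sdiff_add_card_eq_card hXW
  rcases le_total (2 * X.card) W.card with h | h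
  · exact ⟨X, hXW, hX, hWX, hcut, h⟩
  · exact ⟨W \ X, sdiff_subset, hWX, by rwa [Finset.sdiff_sdiff_eq_self hXW],
      by rwa [cutEdges_sdiff hXW], by omega⟩

theorem erase (hE : IsKLEdgeMaximal r k l W E) (hl : 2 ≤ l) (hv : #{e ∈ E | v ∈ e} ≤ k) :
    IsKLEdgeMaximal r k l (W.erase v) {e ∈ E | v ∉ e} := by
  refine ⟨fun e he => ?_, fun S hS F hF => hE.2.1 S (hS.trans (erase_subset _ _)) F
    (hF.trans (filter_subset _ _)), fun f hf hfr hfE => ?_⟩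
  · obtain ⟨heE, hve⟩ := mem_filter.1 he
    exact ⟨(hE.1 e heE).1, subset_erase.2 ⟨(hE.1 e heE).2, hve⟩⟩
  have hvf : v ∉ f := fun h => notMem_erase v W (hf h)
  obtain ⟨S, hSW, F, hF, hFS, hlS, hconn⟩ :=
    hE.2.2 f (hf.trans (erase_subset _ _)) hfr fun h => hfE (mem_filter.2 ⟨h, hvf⟩)
  have hvS : v ∉ S := by
    intro hvS
    have hF_deg := IsEdgeConnected.le_card_filter_mem hconn (by omega) hvS
    have : #{e ∈ F | v ∈ e} ≤ #{e ∈ E | v ∈ e} := by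
      refine card_le_card fun e he => ?_
      obtain ⟨heF, hve⟩ := mem_filter.1 he
      rcases mem_insert.1 (hF heF) with rfl | heE
      · exact absurd hve hvf
      · exact mem_filter.2 ⟨heE, hve⟩
    omega
  refine ⟨S, subset_erase.2 ⟨hSW, hvS⟩, F, fun e he => ?_, hFS, hlS, hconn⟩
  rcases mem_insert.1 (hF he) with rfl | heE
  · exact mem_insert_self _ _
  · exact mem_insert_of_mem (mem_filter.2 ⟨heE, fun hve => hvS (hFS e he hve)⟩)

theorem forall_subset_of_mem_insert_cutEdges (hE : IsKLEdgeMaximal r k l W E) (hl : 2 ≤ l)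
    (hr : 1 ≤ r) (hcov : ∀ v ∈ X, ∃ e ∈ cutEdges E W X, v ∈ e)
    (hK : (cutEdges E W X).card ≤ k) (hX : X.card.choose (r - 1) ≤ k)
    (hf : f ∈ cutEdges (W.powersetCard r) W X) (hfE : f ∉ E) :
    ∀ e ∈ insert f (cutEdges E W X), X ⊆ e := by
  obtain ⟨hfWr, hfX, hfWX⟩ := mem_cutEdges.1 hf
  obtain ⟨hfW, hfr⟩ := mem_powersetCard.1 hfWr
  obtain ⟨S, hSW, F, hF, hfF, hFS, hlS, hconn⟩ := hE.exists_isEdgeConnected_mem hfW hfr hfE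
  set K := cutEdges E W X
  have hFr : ∀ e ∈ insert f E, e.card = r := fun e he =>
    (mem_insert.1 he).elim (· ▸ hfr) fun heE => (hE.1 e heE).1
  have hsize : (insert f K).card ≤ k + 1 := (card_insert_le _ _).trans (by omega)
  have hcut_eq := hconn.cutEdges_inter_eq_insert hF hSW (hFS f hfF) hfX hfWX hsize
  have hXS : X ⊆ S := fun v hv => by
    obtain ⟨e, he, hve⟩ := hcov v hv
    exact hFS e (filter_subset _ _ (hcut_eq ▸ mem_insert_of_mem he)) hve
  rw [inter_eq_left.2 hXS] at hcut_eq
  refine forall_subset_of_le_choose_add_card_filter_mem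
    (fun e he => ⟨hFr e (insert_subset_insert f (filter_subset _ _) he), fun heX => ?_⟩)
    hsize hX fun v hv => ?_
  · obtain ⟨u, hu⟩ := (mem_cutEdges.1 (hcut_eq ▸ he : e ∈ cutEdges F S X)).2.2
    exact (mem_sdiff.1 (mem_inter.1 hu).2).2 (heX (mem_inter.1 hu).1)
  calc k + 1 ≤ #{e ∈ F | v ∈ e} := hconn.le_card_filter_mem (by omega) (hXS hv)
    _ ≤ #({e ∈ X.powersetCard r | v ∈ e} ∪ {e ∈ insert f K | v ∈ e}) := card_le_card ?_
    _ ≤ _ := card_union_le _ _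
    _ = _ := by rw [card_filter_mem_powersetCard hv hr]
  intro e he
  obtain ⟨heF, hve⟩ := mem_filter.1 he
  by_cases heX : e ⊆ X
  · exact mem_union_left _ (mem_filter.2 ⟨mem_powersetCard.2 ⟨heX, hFr e (hF heF)⟩, hve⟩)
  obtain ⟨u, hue, huX⟩ := not_subset.1 heX
  refine mem_union_right _ (mem_filter.2 ⟨hcut_eq ▸ mem_cutEdges.2 ⟨heF, ?_, ?_⟩, hve⟩)
  exacts [⟨v, mem_inter.2 ⟨hve, hv⟩⟩,
    ⟨u, mem_inter.2 ⟨hue, mem_sdiff.2 ⟨hFS e heF hue, huX⟩⟩⟩]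

theorem exists_card_filter_mem_eq {t : ℕ} (hE : IsKLEdgeMaximal r k l W E) (hr : 2 ≤ r)
    (hrt : r ≤ t) (ht1 : (t - 1).choose (r - 1) ≤ k) (ht2 : k < t.choose (r - 1))
    (htl : t + 1 ≤ l) (hlW : l ≤ W.card) (hW : W.card < 2 * t) :
    ∃ v ∈ W, #{e ∈ E | v ∈ e} = k := by
  have hdeg : ∀ v ∈ W, k ≤ #{e ∈ E | v ∈ e} := fun v hv =>
    hE.le_card_filter_mem (by omega) (by omega)
      (ht2.le.trans (Nat.choose_le_choose _ (by omega))) hv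
  obtain ⟨X, hXW, hX, hWX, hK, hX_half⟩ := hE.exists_cutEdges_le hlW
  have hcov : ∀ v ∈ X, ∃ e ∈ cutEdges E W X, v ∈ e := by
    intro v hv
    refine exists_mem_cutEdges_of_choose_lt hE.1 (by omega) hv ((lt_of_lt_of_le ?_ ht1).trans_le
      (hdeg v (hXW hv)))
    -- `C(|X|-1, r-1) ≤ C(t-2, r-1) < C(t-1, r-1)` by Pascal's rule, since `r ≤ t`
    have hpascal := Nat.choose_eq_choose_pred_add (n := t - 1) (k := r - 1) (by omega) (by omega)
    have := Nat.choose_pos (by omega : r - 1 - 1 ≤ t - 1 - 1)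
    have := Nat.choose_le_choose (r - 1) (by omega : X.card - 1 ≤ t - 1 - 1)
    omega
  obtain ⟨f, hf, hfE⟩ : ∃ f ∈ cutEdges (W.powersetCard r) W X, f ∉ E := by
    by_contra! hall
    have := (choose_le_card_cutEdges_powersetCard hr hXW hX hWX).trans
      (card_le_card fun e he => mem_cutEdges.2 ⟨hall e he, (mem_cutEdges.1 he).2⟩)
    have := Nat.choose_le_choose (r - 1) (by omega : t ≤ W.card - 1)
    omega
  have hX_sub : ∀ g ∈ cutEdges (W.powersetCard r) W X, X ⊆ g := by
    have hx : X.card.choose (r - 1) ≤ k := (Nat.choose_le_choose _ (by omega)).trans ht1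
    intro g hg
    by_cases hgE : g ∈ E
    · exact hE.forall_subset_of_mem_insert_cutEdges (by omega) (by omega) hcov hK hx hf hfE g
        (mem_insert_of_mem (mem_cutEdges.2 ⟨hgE, (mem_cutEdges.1 hg).2⟩))
    · exact hE.forall_subset_of_mem_insert_cutEdges (by omega) (by omega) hcov hK hx hg hgE g
        (mem_insert_self _ _)
  obtain ⟨v, rfl⟩ := card_eq_one.1 (le_antisymm
    (card_le_one_of_forall_subset_of_mem_cutEdges hr (by omega) hXW hWX hX_sub)
    (card_pos.2 hX))
  have hvW := hXW (mem_singleton_self v)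
  refine ⟨v, hvW, le_antisymm ((card_le_card (filter_mem_subset_cutEdges_singleton fun e he =>
    ⟨by have := (hE.1 e he).1; omega, (hE.1 e he).2⟩)).trans hK) (hdeg v hvW)⟩

theorem choose_add_mul_le_card {t : ℕ} (hE : IsKLEdgeMaximal r k l W E) (hr : 2 ≤ r)
    (hrt : r ≤ t) (ht1 : (t - 1).choose (r - 1) ≤ k) (ht2 : k < t.choose (r - 1))
    (htl : t + 1 ≤ l) (hlW : l ≤ W.card) (hW : W.card < 2 * t) :
    (l - 1).choose r + (W.card - l + 1) * k ≤ E.card := by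
  obtain ⟨n, hn⟩ : ∃ n, W.card = n := ⟨_, rfl⟩
  induction n generalizing W E with
  | zero => omega
  | succ n ih =>
    obtain ⟨v, hv, hvk⟩ := hE.exists_card_filter_mem_eq hr hrt ht1 ht2 htl hlW hW
    have hE' := hE.erase (by omega) hvk.le
    have hcard' : (W.erase v).card = n := by rw [card_erase_of_mem hv, hn, Nat.add_sub_cancel]
    have hrest : (l - 1).choose r + (n + 1 - l) * k ≤ #{e ∈ E | v ∉ e} := by
      rcases lt_or_ge n l with hnl | hln
      · have := card_le_card (hE'.powersetCard_subset (by omega))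
        rw [card_powersetCard, hcard', show n = l - 1 by omega] at this
        rw [show n + 1 - l = 0 by omega]
        simpa using this
      · have := ih hE' (by omega) (by omega) hcard'
        rwa [hcard', show n - l + 1 = n + 1 - l by omega] at this
    have hsplit := card_filter_add_card_filter_not (s := E) (v ∈ ·)
    rw [hn, add_one_mul]
    omega

end IsKLEdgeMaximal

theorem stmt_12 (n k l r t : ℕ) (hk : 2 ≤ k) (hr : 2 ≤ r)
    (ht1 : (t - 1).choose (r - 1) ≤ k) (ht2 : k < t.choose (r - 1))
    (hl : t + 1 ≤ l) (hln : l ≤ n) (hn2t : n < 2 * t)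
    (E : Finset (Finset (Fin n)))
    (hmax : IsKLEdgeMaximal r k l Finset.univ E) :
    (l - 1).choose r + (n - l + 1) * k ≤ E.card := by
  have hrt : r ≤ t := Nat.le_of_one_lt_choose_sub_one (by omega)
  simpa using hmax.choose_add_mul_le_card hr hrt ht1 ht2 hl (by simpa using hln)
    (by simpa using hn2t)
end

section
/- Let H be a (k,l)-edge-maximal r-uniform hypergraph with n ≥ l ≥ t+1, k, r ≥ 2, where t is the largest integer with C(t-1,r-1) ≤ k. If X is a nonempty proper subset of V(H) with |E_H(X)| = k and |X| ≥ l, then the induced subhypergraph H[X] is also a (k,l)-edge-maximal r-uniform hypergraph. -/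
theorem stmt_15 (n k l r t : ℕ) (hk : 2 ≤ k) (hr : 2 ≤ r)
    (ht1 : (t - 1).choose (r - 1) ≤ k) (ht2 : k < t.choose (r - 1))
    (hl : t + 1 ≤ l) (hln : l ≤ n)
    (E : Finset (Finset (Fin n)))
    (hmax : IsKLEdgeMaximal r k l Finset.univ E)
    (X : Finset (Fin n)) (hXne : X.Nonempty) (hXprop : X ≠ Finset.univ)
    (hcut : (cutEdges E Finset.univ X).card = k)
    (hX : l ≤ X.card) :
    IsKLEdgeMaximal r k l X (E.filter fun e => e ⊆ X) := by
  obtain ⟨h1, h2, h3⟩ := hmax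
  refine ⟨?_, ?_, ?_⟩
  · intro e he
    simp only [Finset.mem_filter] at he
    exact ⟨(h1 e he.1).1, he.2⟩
  · intro S _ E' hE' hES hlS
    exact h2 S (Finset.subset_univ S) E' (hE'.trans (Finset.filter_subset _ _)) hES hlS
  · intro e heX her heE
    have heE' : e ∉ E := fun h => heE (Finset.mem_filter.2 ⟨h, heX⟩)
    obtain ⟨S, _, E', hE', hES, hlS, hconn⟩ := h3 e (Finset.subset_univ e) her heE'
    have hSX : S ⊆ X := by
      by_contra hnot
      have hSdiff : (S \ X).Nonempty := by
        rw [Finset.sdiff_nonempty]; exact hnot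
      by_cases hint : (S ∩ X).Nonempty
      · have hsub : cutEdges E' S (S ∩ X) ⊆ cutEdges E Finset.univ X := by
          intro f hf
          simp only [cutEdges, Finset.mem_filter] at hf ⊢
          obtain ⟨hfE', hc1, hc2⟩ := hf
          have hfne : f ≠ e := by
            rintro rfl
            obtain ⟨x, hx⟩ := hc2
            simp only [Finset.mem_inter, Finset.mem_sdiff] at hx
            exact hx.2.2 ⟨hx.2.1, heX hx.1⟩
          have hfE : f ∈ E := by
            rcases Finset.mem_insert.1 (hE' hfE') with h | h
            · exact absurd h hfne
            · exact h
          refine ⟨hfE, ?_, ?_⟩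
          · obtain ⟨x, hx⟩ := hc1
            simp only [Finset.mem_inter] at hx
            exact ⟨x, Finset.mem_inter.2 ⟨hx.1, hx.2.2⟩⟩
          · obtain ⟨x, hx⟩ := hc2
            simp only [Finset.mem_inter, Finset.mem_sdiff] at hx
            refine ⟨x, Finset.mem_inter.2 ⟨hx.1, Finset.mem_sdiff.2 ⟨Finset.mem_univ x, ?_⟩⟩⟩
            exact fun hxX => hx.2.2 ⟨hx.2.1, hxX⟩
        have hdiff : S \ (S ∩ X) = S \ X := by
          ext x; simp only [Finset.mem_sdiff, Finset.mem_inter]; tauto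
        have hk1 := hconn (S ∩ X) Finset.inter_subset_left hint
          (by rw [hdiff]; exact hSdiff)
        have := Finset.card_le_card hsub
        omega
      · have heE'' : e ∉ E' := by
          intro h
          obtain ⟨x, hx⟩ := Finset.card_pos.1 (by omega : 0 < e.card)
          exact hint ⟨x, Finset.mem_inter.2 ⟨hES e h hx, heX hx⟩⟩
        have hE'E : E' ⊆ E := by
          intro f hf
          rcases Finset.mem_insert.1 (hE' hf) with h | h
          · exact absurd (h ▸ hf) heE''
          · exact h
        obtain ⟨X', hX'S, hX'ne, hX'c, hcard⟩ :=
          h2 S (Finset.subset_univ S) E' hE'E hES hlS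
        have := hconn X' hX'S hX'ne hX'c
        omega
    refine ⟨S, hSX, E', ?_, hES, hlS, hconn⟩
    intro f hf
    rcases Finset.mem_insert.1 (hE' hf) with h | h
    · exact Finset.mem_insert.2 (Or.inl h)
    · exact Finset.mem_insert.2 (Or.inr (Finset.mem_filter.2 ⟨h, (hES f hf).trans hSX⟩))
end

section
/- Let n, k, l, r, t, s be integers with k, r ≥ 2, n ≥ l ≥ t+1, where t is the largest integer with C(t-1,r-1) ≤ k and s is the largest integer with k + C(s,r) ≤ k·s, and suppose l - 1 ≤ s. If H is a (k,l)-edge-maximal r-uniform hypergraph on n vertices, then |E(H)| ≤ C(l-1,r) + (n-l+1)·k. -/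
open Finset

lemma pascal' (r a : ℕ) (hr : 1 ≤ r) :
    (a+1).choose r = a.choose (r-1) + a.choose r := by
  obtain ⟨r', rfl⟩ : ∃ r', r = r' + 1 := ⟨r - 1, by omega⟩
  simp [Nat.choose_succ_succ]

lemma regA (k r t : ℕ) (hr : 2 ≤ r) (ht1 : (t-1).choose (r-1) ≤ k) :
    ∀ a, 1 ≤ a → a ≤ t → a.choose r + k ≤ k * a := by
  intro a
  induction a with
  | zero => omega
  | succ a ih =>
    intro _ hat
    rcases Nat.eq_zero_or_pos a with rfl | ha
    · simp [Nat.choose_eq_zero_of_lt (by omega : 1 < r)]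
    · have h := ih ha (by omega)
      have hp := pascal' r a (by omega)
      have hle : a.choose (r-1) ≤ (t-1).choose (r-1) :=
        Nat.choose_le_choose _ (by omega)
      have : k * (a+1) = k * a + k := by ring
      omega

lemma regB (k r t s : ℕ) (hr : 2 ≤ r) (ht0 : 1 ≤ t)
    (ht2 : k < t.choose (r-1)) (hs1 : k + s.choose r ≤ k * s) :
    ∀ d, t ≤ s - d → (s-d).choose r + k ≤ k * (s-d) := by
  intro d
  induction d with
  | zero => intro _; simp only [Nat.sub_zero]; linarith
  | succ d ih =>
    intro h
    have hds : d + 1 < s := by omega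
    have ih' := ih (by omega)
    have hsd : s - d = (s - (d+1)) + 1 := by omega
    set a := s - (d+1) with ha
    rw [hsd] at ih'
    have hp := pascal' r a (by omega)
    have hge : k < a.choose (r-1) :=
      lt_of_lt_of_le ht2 (Nat.choose_le_choose _ h)
    have : k * (a+1) = k * a + k := by ring
    omega

lemma keylem (k r t s : ℕ) (hr : 2 ≤ r) (hk : 2 ≤ k) (ht0 : 1 ≤ t)
    (ht1 : (t-1).choose (r-1) ≤ k) (ht2 : k < t.choose (r-1))
    (hs1 : k + s.choose r ≤ k * s)
    (a : ℕ) (ha1 : 1 ≤ a) (has : a ≤ s) : a.choose r + k ≤ k * a := by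
  rcases le_or_gt a t with h | h
  · exact regA k r t hr ht1 a ha1 h
  · have := regB k r t s hr ht0 ht2 hs1 (s - a) (by omega)
    rwa [show s - (s-a) = a from by omega] at this

lemma conv_step (r a b : ℕ) (hr : 2 ≤ r) (h1 : 1 ≤ a) (h2 : a ≤ b + 1) :
    a.choose r + b.choose r ≤ (a-1).choose r + (b+1).choose r := by
  have hpa := pascal' r (a-1) (by omega)
  rw [show a - 1 + 1 = a from by omega] at hpa
  have hpb := pascal' r b (by omega)
  have : (a-1).choose (r-1) ≤ b.choose (r-1) := Nat.choose_le_choose _ (by omega)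
  omega

lemma convex (r : ℕ) (hr : 2 ≤ r) : ∀ j a b : ℕ, j ≤ a → a ≤ b →
    a.choose r + b.choose r ≤ (a-j).choose r + (b+j).choose r := by
  intro j
  induction j with
  | zero => simp
  | succ j ih =>
    intro a b hj hab
    calc a.choose r + b.choose r ≤ (a-j).choose r + (b+j).choose r :=
          ih a b (by omega) hab
      _ ≤ (a-j-1).choose r + (b+j+1).choose r :=
          conv_step r _ _ hr (by omega) (by omega)
      _ = (a-(j+1)).choose r + (b+(j+1)).choose r := by
          rw [show a-j-1 = a-(j+1) from by omega, Nat.add_assoc]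

lemma caseDsym (k l r t s : ℕ) (hr : 2 ≤ r) (hk : 2 ≤ k) (ht0 : 1 ≤ t)
    (ht1 : (t-1).choose (r-1) ≤ k) (ht2 : k < t.choose (r-1))
    (hs1 : k + s.choose r ≤ k * s) (hls : l - 1 ≤ s) (hl : t + 1 ≤ l)
    (a b : ℕ) (hab : a ≤ b) (hbl : b ≤ l-1) (habl : l ≤ a + b) :
    a.choose r + b.choose r + k + k*(l-1) ≤ (l-1).choose r + k*(a+b) := by
  have hbpos : 1 ≤ b := by omega
  set j := l - 1 - b with hj
  have hja : j ≤ a := by omega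
  have hcv := convex r hr j a b hja hab
  rw [show a - j = a + b - (l-1) from by omega,
      show b + j = l-1 from by omega] at hcv
  set c := a + b - (l-1) with hc
  have hkc := keylem k r t s hr hk ht0 ht1 ht2 hs1 c (by omega) (by omega)
  have hm : k * c + k * (l-1) = k * (a+b) := by
    rw [← Nat.mul_add]; congr 1; omega
  linarith

lemma caseD (k l r t s : ℕ) (hr : 2 ≤ r) (hk : 2 ≤ k) (ht0 : 1 ≤ t)
    (ht1 : (t-1).choose (r-1) ≤ k) (ht2 : k < t.choose (r-1))
    (hs1 : k + s.choose r ≤ k * s) (hls : l - 1 ≤ s) (hl : t + 1 ≤ l)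
    (a b : ℕ) (hal : a ≤ l-1) (hbl : b ≤ l-1) (habl : l ≤ a + b) :
    a.choose r + b.choose r + k + k*(l-1) ≤ (l-1).choose r + k*(a+b) := by
  rcases le_total a b with h | h
  · exact caseDsym k l r t s hr hk ht0 ht1 ht2 hs1 hls hl a b h hbl habl
  · have := caseDsym k l r t s hr hk ht0 ht1 ht2 hs1 hls hl b a h hal (by omega)
    rw [Nat.add_comm b a] at this
    linarith

lemma mainlem {V : Type*} [DecidableEq V] (k l r t s : ℕ)
    (hk : 2 ≤ k) (hr : 2 ≤ r) (ht0 : 1 ≤ t)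
    (ht1 : (t-1).choose (r-1) ≤ k) (ht2 : k < t.choose (r-1))
    (hs1 : k + s.choose r ≤ k * s) (hl : t + 1 ≤ l) (hls : l - 1 ≤ s) :
    ∀ (N : ℕ) (W : Finset V) (E : Finset (Finset V)), W.card ≤ N →
      (∀ e ∈ E, e.card = r ∧ e ⊆ W) →
      (∀ S ⊆ W, ∀ E' ⊆ E, (∀ e ∈ E', e ⊆ S) → l ≤ S.card →
        ∃ X ⊆ S, X.Nonempty ∧ (S \ X).Nonempty ∧ (cutEdges E' S X).card ≤ k) →
      l ≤ W.card →
      E.card + k * (l-1) ≤ (l-1).choose r + k * W.card := by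
  intro N
  induction N with
  | zero =>
    intro W E hWN _ _ hlW
    exact absurd (le_trans hlW hWN) (by omega)
  | succ N ih =>
    intro W E hWN hE hcut hlW
    obtain ⟨X, hXW, hXne, hYne, hcutk⟩ :=
      hcut W Finset.Subset.rfl E Finset.Subset.rfl (fun e he => (hE e he).2) hlW
    set Y := W \ X with hYdef
    set EX := E.filter (fun e => e ⊆ X) with hEXdef
    set EY := E.filter (fun e => e ⊆ Y) with hEYdef
    have hXcard : 1 ≤ X.card := hXne.card_pos
    have hYcard : 1 ≤ Y.card := hYne.card_pos
    have hXWc : X.card ≤ W.card := Finset.card_le_card hXW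
    have hXY : X.card + Y.card = W.card := by
      rw [hYdef, Finset.card_sdiff_of_subset hXW]; omega
    -- splitting the edge count
    have hEsplit : E.card ≤ EX.card + EY.card + k := by
      have hsub : E ⊆ EX ∪ EY ∪ cutEdges E W X := by
        intro e he
        have hecard := (hE e he).1
        have heW := (hE e he).2
        have hene : e.Nonempty := by
          rw [← Finset.card_pos, hecard]; omega
        by_cases h1 : (e ∩ X).Nonempty
        · by_cases h2 : (e ∩ (W \ X)).Nonempty
          · exact Finset.mem_union.mpr (Or.inr (Finset.mem_filter.mpr ⟨he, h1, h2⟩))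
          · refine Finset.mem_union.mpr (Or.inl (Finset.mem_union.mpr (Or.inl
              (Finset.mem_filter.mpr ⟨he, fun v hv => ?_⟩))))
            by_contra hvX
            exact h2 ⟨v, Finset.mem_inter.mpr ⟨hv, Finset.mem_sdiff.mpr ⟨heW hv, hvX⟩⟩⟩
        · refine Finset.mem_union.mpr (Or.inl (Finset.mem_union.mpr (Or.inr
            (Finset.mem_filter.mpr ⟨he, fun v hv => ?_⟩))))
          refine Finset.mem_sdiff.mpr ⟨heW hv, fun hvX => ?_⟩
          exact h1 ⟨v, Finset.mem_inter.mpr ⟨hv, hvX⟩⟩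
      calc E.card ≤ (EX ∪ EY ∪ cutEdges E W X).card := Finset.card_le_card hsub
        _ ≤ (EX ∪ EY).card + (cutEdges E W X).card := Finset.card_union_le _ _
        _ ≤ EX.card + EY.card + (cutEdges E W X).card := by
            have := Finset.card_union_le EX EY; omega
        _ ≤ EX.card + EY.card + k := by omega
    -- small bound
    have boundSmall : ∀ (Z : Finset V) (EZ : Finset (Finset V)),
        (∀ e ∈ EZ, e.card = r ∧ e ⊆ Z) → EZ.card ≤ Z.card.choose r := by
      intro Z EZ h
      have hsub : EZ ⊆ Z.powersetCard r := fun e he =>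
        Finset.mem_powersetCard.mpr ⟨(h e he).2, (h e he).1⟩
      calc EZ.card ≤ (Z.powersetCard r).card := Finset.card_le_card hsub
        _ = Z.card.choose r := Finset.card_powersetCard r Z
    have hEXe : ∀ e ∈ EX, e.card = r ∧ e ⊆ X := by
      intro e he
      have := Finset.mem_filter.mp he
      exact ⟨(hE e this.1).1, this.2⟩
    have hEYe : ∀ e ∈ EY, e.card = r ∧ e ⊆ Y := by
      intro e he
      have := Finset.mem_filter.mp he
      exact ⟨(hE e this.1).1, this.2⟩
    -- recursive bounds
    have hrec : ∀ (Z : Finset V) (EZ : Finset (Finset V)), Z ⊆ W → Z.card ≤ N →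
        (∀ e ∈ EZ, e.card = r ∧ e ⊆ Z) → EZ ⊆ E → l ≤ Z.card →
        EZ.card + k * (l-1) ≤ (l-1).choose r + k * Z.card := by
      intro Z EZ hZW hZN hZe hZE hlZ
      refine ih Z EZ hZN hZe ?_ hlZ
      intro S hSZ E' hE' he'S hlS
      exact hcut S (hSZ.trans hZW) E' (hE'.trans hZE) he'S hlS
    have hC := keylem k r t s hr hk ht0 ht1 ht2 hs1 (l-1) (by omega) hls
    have hm : k * X.card + k * Y.card = k * W.card := by
      rw [← Nat.mul_add, hXY]
    rcases le_or_gt l X.card with hXl | hXl <;> rcases le_or_gt l Y.card with hYl | hYl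
    · have h1 := hrec X EX hXW (by omega) hEXe (Finset.filter_subset _ _) hXl
      have h2 := hrec Y EY (Finset.sdiff_subset) (by omega) hEYe (Finset.filter_subset _ _) hYl
      linarith
    · have h1 := hrec X EX hXW (by omega) hEXe (Finset.filter_subset _ _) hXl
      have h2 := boundSmall Y EY hEYe
      have h3 := keylem k r t s hr hk ht0 ht1 ht2 hs1 Y.card hYcard (by omega)
      linarith
    · have h1 := hrec Y EY (Finset.sdiff_subset) (by omega) hEYe (Finset.filter_subset _ _) hYl
      have h2 := boundSmall X EX hEXe
      have h3 := keylem k r t s hr hk ht0 ht1 ht2 hs1 X.card hXcard (by omega)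
      linarith
    · have h1 := boundSmall X EX hEXe
      have h2 := boundSmall Y EY hEYe
      have h3 := caseD k l r t s hr hk ht0 ht1 ht2 hs1 hls hl X.card Y.card
        (by omega) (by omega) (by omega)
      rw [hXY] at h3
      linarith

theorem stmt_16 (n k l r t s : ℕ) (hk : 2 ≤ k) (hr : 2 ≤ r)
    (ht1 : (t - 1).choose (r - 1) ≤ k) (ht2 : k < t.choose (r - 1))
    (hs1 : k + s.choose r ≤ k * s)
    (hs2 : ∀ m : ℕ, k + m.choose r ≤ k * m → m ≤ s)
    (hl : t + 1 ≤ l) (hln : l ≤ n) (hls : l - 1 ≤ s)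
    (E : Finset (Finset (Fin n)))
    (hmax : IsKLEdgeMaximal r k l Finset.univ E) :
    E.card ≤ (l - 1).choose r + (n - l + 1) * k := by
  have ht0 : 1 ≤ t := by
    by_contra h
    have : t = 0 := by omega
    rw [this, Nat.choose_eq_zero_of_lt (by omega : 0 < r - 1)] at ht2
    omega
  have hmain := mainlem k l r t s hk hr ht0 ht1 ht2 hs1 hl hls n
    (Finset.univ : Finset (Fin n)) E (by simp) hmax.1 hmax.2.1 (by simp [hln])
  simp only [Finset.card_univ, Fintype.card_fin] at hmain
  have hsum : k * (n - l + 1) + k * (l - 1) = k * n := by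
    rw [← Nat.mul_add]; congr 1; omega
  rw [Nat.mul_comm (n - l + 1) k]
  linarith
end

section
/- Let n, k, l, r, t, s, p, q be integers with k, r ≥ 2, n ≥ l ≥ t+1, n = p(l-1)+q with 0 ≤ q < l-1, where t is the largest integer with C(t-1,r-1) ≤ k and s is the largest integer with k + C(s,r) ≤ k·s, and suppose l-1 > s and q ≤ s. If H is a (k,l)-edge-maximal r-uniform hypergraph on n vertices, then |E(H)| ≤ p·C(l-1,r) + (p-1+q)·k. -/
/-!
Cutting along cuts with at most `k` crossing edges, recursively until every piece has fewer
than `l` vertices, partitions the vertex set into parts of sizes `mᵢ ≤ l - 1` with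
`|E| + k ≤ ∑ (C(mᵢ, r) + k)`: each cut loses at most `k` edges, and a piece on `m` vertices
carries at most `C(m, r)` edges.

Write `C(m, r) + k = ψ m + k m`. The function `ψ` is convex with `ψ 1 = 0` and
`ψ s ≤ 0 ≤ ψ (l - 1)`, so parts of size at most `s` contribute at most `0`, and a part of size
`m > s` at most `(m - s) / (l - 1 - s) · ψ (l - 1)`. Since `n = p (l - 1) + q` with `q ≤ s`,
the parts larger than `s` satisfy `∑ (mᵢ - s) ≤ p (l - 1 - s)` (if there are more than `p` of
them, their total size is at most `n`), hence `∑ ψ mᵢ ≤ p ψ (l - 1)`.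
-/

open Finset

section Convexity

variable (f : ℕ → ℤ)

theorem sub_eq_sum_range_slope (a d : ℕ) :
    f (a + d) - f a = ∑ i ∈ range d, (f (a + i + 1) - f (a + i)) :=
  (sum_range_sub (fun i => f (a + i)) d).symm

variable {f}

theorem mul_add_le_of_monotone_slope (hf : Monotone fun x => f (x + 1) - f x) (a d e : ℕ) :
    ((d : ℤ) + e) * f (a + d) ≤ e * f a + d * f (a + d + e) := by
  have hleft : f (a + d) - f a ≤ d * (f (a + d + 1) - f (a + d)) := by
    rw [sub_eq_sum_range_slope f a d]
    simpa using sum_le_card_nsmul (range d) _ _ fun i hi =>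
      hf (show a + i ≤ a + d by simp at hi; omega)
  have hright : (e : ℤ) * (f (a + d + 1) - f (a + d)) ≤ f (a + d + e) - f (a + d) := by
    rw [sub_eq_sum_range_slope f (a + d) e]
    simpa using card_nsmul_le_sum (range e) _ _ fun i _ =>
      hf (show a + d ≤ a + d + i by omega)
  linear_combination (e : ℤ) * hleft + (d : ℤ) * hright

theorem nonpos_of_monotone_slope (hf : Monotone fun x => f (x + 1) - f x) {a m b : ℕ}
    (ham : a ≤ m) (hmb : m ≤ b) (ha : f a ≤ 0) (hb : f b ≤ 0) : f m ≤ 0 := by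
  obtain ⟨d, rfl⟩ := Nat.exists_eq_add_of_le ham
  obtain ⟨e, rfl⟩ := Nat.exists_eq_add_of_le hmb
  have hchord := mul_add_le_of_monotone_slope hf a d e
  rcases Nat.eq_zero_or_pos d with rfl | hd
  · simpa using ha
  · have : (0 : ℤ) < d + e := by positivity
    nlinarith

end Convexity

theorem sum_map_sub_le_mul {A : Multiset ℕ} {L s p q : ℕ} (hA : ∀ m ∈ A, m ≤ L) (hsL : s ≤ L)
    (hsum : A.sum ≤ p * L + q) (hqs : q ≤ s) :
    (A.map fun m : ℕ => (m : ℤ) - s).sum ≤ p * ((L : ℤ) - s) := by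
  have hmass : (A.map fun m : ℕ => (m : ℤ) - s).sum = A.sum - A.card * s := by
    simp [Multiset.sum_map_sub, Nat.cast_multiset_sum]
  rcases le_or_gt A.card p with hcard | hcard
  · have hle := Multiset.sum_le_card_nsmul (A.map fun m : ℕ => (m : ℤ) - s) ((L : ℤ) - s)
      fun x hx => by
        obtain ⟨m, hm, rfl⟩ := Multiset.mem_map.mp hx
        have := hA m hm
        omega
    rw [Multiset.card_map, nsmul_eq_mul] at hle
    have : (A.card : ℤ) * (L - s) ≤ p * (L - s) := by gcongr; omega
    linarith
  · have hsum' : (A.sum : ℤ) ≤ p * L + q := by exact_mod_cast hsum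
    have : ((p : ℤ) + 1) * s ≤ A.card * s := by gcongr; omega
    have hqs' : (q : ℤ) ≤ s := by exact_mod_cast hqs
    linarith

theorem sum_map_le_of_monotone_slope {ψ : ℕ → ℤ} (hψ : Monotone fun x => ψ (x + 1) - ψ x)
    {L s p q : ℕ} (h1 : ψ 1 ≤ 0) (hs : ψ s ≤ 0) (hL : 0 ≤ ψ L) (hsL : s < L) (hqs : q ≤ s)
    {M : Multiset ℕ} (hM : ∀ m ∈ M, 1 ≤ m ∧ m ≤ L) (hsum : M.sum = p * L + q) :
    (M.map ψ).sum ≤ p * ψ L := by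
  set A := M.filter (s < ·)
  set B := M.filter fun m => ¬ s < m
  have hsplit : (M.map ψ).sum = (A.map ψ).sum + (B.map ψ).sum := by
    rw [← Multiset.sum_add, ← Multiset.map_add, Multiset.filter_add_not]
  have hAsum : A.sum ≤ p * L + q := by
    rw [← hsum, ← Multiset.filter_add_not (s < ·) M, Multiset.sum_add]
    exact Nat.le_add_right _ _
  have hB : (B.map ψ).sum ≤ 0 := by
    simpa using Multiset.sum_le_card_nsmul (B.map ψ) (0 : ℤ) fun x hx => by
      obtain ⟨m, hm, rfl⟩ := Multiset.mem_map.mp hx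
      obtain ⟨hmM, hms⟩ := Multiset.mem_filter.mp hm
      exact nonpos_of_monotone_slope hψ (hM m hmM).1 (not_lt.mp hms) h1 hs
  -- each large part lies below the chord of `ψ` from `(s, 0)` to `(L, ψ L)`
  have hA : ((L : ℤ) - s) * (A.map ψ).sum ≤ ψ L * (A.map fun m : ℕ => (m : ℤ) - s).sum := by
    rw [← Multiset.sum_map_mul_left, ← Multiset.sum_map_mul_left]
    refine Multiset.sum_map_le_sum_map _ _ fun m hm => ?_
    obtain ⟨hmM, hsm⟩ := Multiset.mem_filter.mp hm
    obtain ⟨d, rfl⟩ := Nat.exists_eq_add_of_le hsm.le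
    obtain ⟨e, he⟩ := Nat.exists_eq_add_of_le (hM _ hmM).2
    have hchord := mul_add_le_of_monotone_slope hψ s d e
    rw [← he] at hchord
    have hLs : (L : ℤ) - s = d + e := by omega
    rw [hLs]
    push_cast
    linarith [mul_nonpos_of_nonneg_of_nonpos e.cast_nonneg hs]
  have hmass : (A.map fun m : ℕ => (m : ℤ) - s).sum ≤ p * ((L : ℤ) - s) :=
    sum_map_sub_le_mul (fun m hm => (hM m (Multiset.mem_of_mem_filter hm)).2) hsL.le
      hAsum hqs
  have hAbound : (A.map ψ).sum ≤ p * ψ L := by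
    refine le_of_mul_le_mul_left ?_ (by omega : (0 : ℤ) < L - s)
    calc ((L : ℤ) - s) * (A.map ψ).sum ≤ ψ L * (A.map fun m : ℕ => (m : ℤ) - s).sum := hA
      _ ≤ ψ L * (p * ((L : ℤ) - s)) := mul_le_mul_of_nonneg_left hmass hL
      _ = (L - s) * (p * ψ L) := by ring
  linarith

theorem sum_choose_add_le {r k s L p q : ℕ} (hr : 2 ≤ r) (hs : k + s.choose r ≤ k * s)
    (hL : k * L ≤ k + L.choose r) (hsL : s < L) (hqs : q ≤ s)
    {M : Multiset ℕ} (hM : ∀ m ∈ M, 1 ≤ m ∧ m ≤ L) (hsum : M.sum = p * L + q) :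
    (M.map fun m => m.choose r + k).sum ≤ p * L.choose r + (p + q) * k := by
  set ψ : ℕ → ℤ := fun m => m.choose r + k - k * m
  have hψ : Monotone fun x => ψ (x + 1) - ψ x := by
    obtain ⟨r', rfl⟩ := Nat.exists_eq_add_of_le' (by omega : 1 ≤ r)
    intro a b hab
    have : (a.choose r' : ℤ) ≤ b.choose r' := by exact_mod_cast Nat.choose_le_choose r' hab
    simp only [ψ, Nat.choose_succ_succ']
    push_cast
    linarith
  have hψ1 : ψ 1 ≤ 0 := by simp [ψ, Nat.choose_eq_zero_of_lt (by omega : 1 < r)]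
  have hψs : ψ s ≤ 0 := by
    have : (k + s.choose r : ℤ) ≤ k * s := by exact_mod_cast hs
    simp only [ψ]; linarith
  have hψL : 0 ≤ ψ L := by
    have : (k * L : ℤ) ≤ k + L.choose r := by exact_mod_cast hL
    simp only [ψ]; linarith
  have key := sum_map_le_of_monotone_slope hψ hψ1 hψs hψL hsL hqs hM hsum
  have hdecomp : ((M.map fun m => m.choose r + k).sum : ℤ) = (M.map ψ).sum + k * M.sum := by
    simp [ψ, Nat.cast_multiset_sum, Multiset.map_map, ← Multiset.sum_map_mul_left]
  have : ((M.map fun m => m.choose r + k).sum : ℤ) ≤ p * L.choose r + (p + q) * k := by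
    rw [hdecomp, hsum]; push_cast; simp only [ψ] at key; linarith
  exact_mod_cast this

section Decomposition

variable {V : Type*} [DecidableEq V]

theorem card_le_add_card_cutEdges {E : Finset (Finset V)} {S : Finset V} (hE : ∀ e ∈ E, e ⊆ S)
    (X : Finset V) :
    #E ≤ #(E.filter (· ⊆ X)) + #(E.filter (· ⊆ S \ X)) + #(cutEdges E S X) := by
  have hcover : E ⊆ E.filter (· ⊆ X) ∪ E.filter (· ⊆ S \ X) ∪ cutEdges E S X := by
    intro e he
    simp only [cutEdges, mem_union, mem_filter, Finset.Nonempty, mem_inter, subset_iff,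
      mem_sdiff]
    have := subset_iff.mp (hE e he)
    grind
  calc #E ≤ #(E.filter (· ⊆ X) ∪ E.filter (· ⊆ S \ X) ∪ cutEdges E S X) := card_le_card hcover
    _ ≤ _ := (card_union_le _ _).trans (Nat.add_le_add_right (card_union_le _ _) _)

theorem exists_parts_of_cutEdges_le {r k l : ℕ} {W : Finset V} {E : Finset (Finset V)}
    (hunif : ∀ e ∈ E, #e = r)
    (hcut : ∀ S ⊆ W, ∀ E' ⊆ E, (∀ e ∈ E', e ⊆ S) → l ≤ #S →
      ∃ X ⊆ S, X.Nonempty ∧ (S \ X).Nonempty ∧ #(cutEdges E' S X) ≤ k)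
    {S : Finset V} (hSW : S ⊆ W) (hS : S.Nonempty) {E' : Finset (Finset V)} (hE' : E' ⊆ E)
    (hE'S : ∀ e ∈ E', e ⊆ S) :
    ∃ M : Multiset ℕ, (∀ m ∈ M, 1 ≤ m ∧ m < l) ∧ M.sum = #S ∧
      #E' + k ≤ (M.map fun m => m.choose r + k).sum := by
  induction S using Finset.strongInduction generalizing E' with
  | H S ih =>
  by_cases hlS : l ≤ #S
  · obtain ⟨X, hXS, hX, hY, hcutX⟩ := hcut S hSW E' hE' hE'S hlS
    have hXS' : X ⊂ S := ssubset_of_subset_of_ne hXS (by rintro rfl; simp at hY)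
    obtain ⟨M₁, hM₁, hsum₁, hE₁⟩ := ih X hXS' (hXS.trans hSW) hX
      (filter_subset _ _ |>.trans hE') fun e he => (mem_filter.mp he).2
    obtain ⟨M₂, hM₂, hsum₂, hE₂⟩ := ih (S \ X) (sdiff_ssubset hXS hX) (sdiff_subset.trans hSW) hY
      (filter_subset _ _ |>.trans hE') fun e he => (mem_filter.mp he).2
    refine ⟨M₁ + M₂, ?_, ?_, ?_⟩
    · simpa only [Multiset.mem_add] using fun m hm => hm.elim (hM₁ m) (hM₂ m)
    · rw [Multiset.sum_add, hsum₁, hsum₂, add_comm, card_sdiff_add_card_eq_card hXS]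
    · rw [Multiset.map_add, Multiset.sum_add]
      have := card_le_add_card_cutEdges hE'S X
      omega
  · refine ⟨{#S}, by simpa using ⟨hS, by omega⟩, by simp, ?_⟩
    have : #E' ≤ (#S).choose r := by
      rw [← card_powersetCard]
      exact card_le_card fun e he => mem_powersetCard.mpr ⟨hE'S e he, hunif e (hE' he)⟩
    simpa using this

end Decomposition

theorem stmt_17_general (n k l r s p q : ℕ) (hr : 2 ≤ r)
    (hs1 : k + s.choose r ≤ k * s)
    (hs2 : ∀ m : ℕ, k + m.choose r ≤ k * m → m ≤ s)
    (hln : l ≤ n)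
    (hnpq : n = p * (l - 1) + q) (hq : q < l - 1)
    (hls : s < l - 1) (hqs : q ≤ s)
    (E : Finset (Finset (Fin n)))
    (hmax : IsKLEdgeMaximal r k l Finset.univ E) :
    E.card ≤ p * (l - 1).choose r + (p - 1 + q) * k := by
  obtain ⟨hunif, hcut, -⟩ := hmax
  obtain ⟨M, hM, hMsum, hE⟩ := exists_parts_of_cutEdges_le (fun e he => (hunif e he).1) hcut
    Subset.rfl (univ_nonempty_iff.mpr ⟨⟨0, by omega⟩⟩) Subset.rfl
    fun e _ => subset_univ e
  have hL : k * (l - 1) ≤ k + (l - 1).choose r := by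
    by_contra h
    exact hls.not_ge (hs2 _ (not_le.mp h).le)
  have hbound := sum_choose_add_le hr hs1 hL hls hqs
    (fun m hm => ⟨(hM m hm).1, Nat.le_sub_one_of_lt (hM m hm).2⟩)
    (by rw [hMsum, card_univ, Fintype.card_fin, hnpq])
  obtain ⟨p, rfl⟩ := Nat.exists_eq_succ_of_ne_zero (by rintro rfl; omega : p ≠ 0)
  rw [Nat.succ_sub_one]
  linarith [show (p + 1 + q) * k = (p + q) * k + k by ring]

theorem stmt_17 (n k l r t s p q : ℕ) (hk : 2 ≤ k) (hr : 2 ≤ r)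
    (ht1 : (t - 1).choose (r - 1) ≤ k) (ht2 : k < t.choose (r - 1))
    (hs1 : k + s.choose r ≤ k * s)
    (hs2 : ∀ m : ℕ, k + m.choose r ≤ k * m → m ≤ s)
    (hl : t + 1 ≤ l) (hln : l ≤ n)
    (hnpq : n = p * (l - 1) + q) (hq : q < l - 1)
    (hls : s < l - 1) (hqs : q ≤ s)
    (E : Finset (Finset (Fin n)))
    (hmax : IsKLEdgeMaximal r k l Finset.univ E) :
    E.card ≤ p * (l - 1).choose r + (p - 1 + q) * k :=
  stmt_17_general n k l r s p q hr hs1 hs2 hln hnpq hq hls hqs E hmax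
end
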